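/- Let V be a real-valued potential on ℝ³ satisfying assumption (V), a = |V|^{1/2}, b = |V|^{1/2} sign(V), and set M = Ker(1 + bD_0a), N = Ker(1 + aD_0b) in L²(ℝ³). Then the map φ ↦ a D_0 a φ is a linear isomorphism from M onto N, the map ψ ↦ b D_0 b ψ is a linear isomorphism from N onto M, and these two maps are inverses of each other. -/

import Mathlib

open MeasureTheory Complex Filter Topology Set

noncomputable section

abbrev R3 := EuclideanSpace ℝ (Fin 3)

abbrev L2 : Type := MeasureTheory.Lp ℂ 2 (volume : Measure R3)

/-- Assumption (V): `⟨x⟩² V ∈ (L^p ∩ L^q)(ℝ³)` for some `p < 3/2` and `q > 3`. -/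
def AssumptionV (V : R3 → ℝ) (p q : ℝ) : Prop :=
  1 ≤ p ∧ p < 3 / 2 ∧ 3 < q ∧
    MemLp (fun x => (1 + ‖x‖ ^ 2) * V x) (ENNReal.ofReal p) (volume : Measure R3) ∧
    MemLp (fun x => (1 + ‖x‖ ^ 2) * V x) (ENNReal.ofReal q) (volume : Measure R3)

/-!
Since `b = sign(V) a`, every kernel with a factor `b(x)` or `b(y)` is the corresponding kernel
with `a` times `sign(V(x))` or `sign(V(y))`. Hence `bD₀a = sign(V) · aD₀a`, which yields the
operator identities `(aD₀b)(aD₀a) = (aD₀a)(bD₀a)`, `(bD₀b)(aD₀b) = (bD₀a)(bD₀b)`,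
`(bD₀b)(aD₀a) = (bD₀a)²` and `(aD₀a)(bD₀b) = (aD₀b)²`. The first two make `aD₀a` map
`Ker(1 + bD₀a)` into `Ker(1 + aD₀b)` and `bD₀b` map back; the last two give the inverse
relations, since `(bD₀a)² = 1` on `Ker(1 + bD₀a)` and `(aD₀b)² = 1` on `Ker(1 + aD₀b)`.
-/

namespace Module.End

variable {R M : Type*} [Ring R] [AddCommGroup M] [Module R M] {A B P Q : Module.End R M} {x : M}

theorem apply_mem_ker_of_semiconjBy (h : SemiconjBy A P Q) (hx : x ∈ LinearMap.ker P) :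
    A x ∈ LinearMap.ker Q := by
  rw [LinearMap.mem_ker] at hx ⊢
  rw [← Module.End.mul_apply, ← h.eq, Module.End.mul_apply, hx, map_zero]

theorem apply_eq_self_of_mem_ker_one_add (h : B = P * P) (hx : x ∈ LinearMap.ker (1 + P)) :
    B x = x := by
  have hPx : P x = -x := eq_neg_of_add_eq_zero_right (by simpa using hx)
  rw [h, Module.End.mul_apply, hPx, map_neg, hPx, neg_neg]

end Module.End

section IntegralOperator

variable {X 𝕜 : Type*} [MeasurableSpace X] {μ : Measure X} [RCLike 𝕜] {p : ENNReal}

def IsIntegralOperator (T : Lp 𝕜 p μ → Lp 𝕜 p μ) (k : X → X → 𝕜) : Prop :=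
  ∀ f, T f =ᵐ[μ] fun x => ∫ y, k x y * f y ∂μ

variable {S T : Lp 𝕜 p μ → Lp 𝕜 p μ} {k k' : X → X → 𝕜} {c : X → 𝕜}

theorem IsIntegralOperator.ae_eq_mul_left (hT : IsIntegralOperator T k)
    (hS : IsIntegralOperator S k') (hk : ∀ x y, k' x y = c x * k x y) (f : Lp 𝕜 p μ) :
    S f =ᵐ[μ] fun x => c x * T f x := by
  filter_upwards [hS f, hT f] with x hSx hTx
  simp only [hSx, hTx, hk, mul_assoc, integral_const_mul]

theorem IsIntegralOperator.apply_eq_of_ae_eq_mul (hT : IsIntegralOperator T k')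
    (hS : IsIntegralOperator S k) (hk : ∀ x y, k' x y = k x y * c y) {f g : Lp 𝕜 p μ}
    (hg : g =ᵐ[μ] fun y => c y * f y) : T f = S g := by
  refine Lp.ext <| (hT f).trans <| EventuallyEq.trans ?_ (hS g).symm
  refine Eventually.of_forall fun x => integral_congr_ae ?_
  filter_upwards [hg] with y hy
  rw [hk, hy, mul_assoc]

end IntegralOperator

theorem aD0a_bD0b_mutually_inverse_general
    (V : R3 → ℝ)
    (a b : R3 → ℝ)
    (ha : a = fun x => Real.sqrt |V x|)
    (hb : b = fun x => Real.sqrt |V x| * Real.sign (V x))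
    (Tba Tab Taa Tbb : L2 →L[ℂ] L2)
    (hTba : ∀ f : L2, ⇑(Tba f) =ᵐ[volume] fun x => ∫ y : R3,
      (b x : ℂ) * (a y : ℂ) / (4 * (Real.pi : ℂ) * (‖x - y‖ : ℝ)) * f y)
    (hTab : ∀ f : L2, ⇑(Tab f) =ᵐ[volume] fun x => ∫ y : R3,
      (a x : ℂ) * (b y : ℂ) / (4 * (Real.pi : ℂ) * (‖x - y‖ : ℝ)) * f y)
    (hTaa : ∀ f : L2, ⇑(Taa f) =ᵐ[volume] fun x => ∫ y : R3,
      (a x : ℂ) * (a y : ℂ) / (4 * (Real.pi : ℂ) * (‖x - y‖ : ℝ)) * f y)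
    (hTbb : ∀ f : L2, ⇑(Tbb f) =ᵐ[volume] fun x => ∫ y : R3,
      (b x : ℂ) * (b y : ℂ) / (4 * (Real.pi : ℂ) * (‖x - y‖ : ℝ)) * f y) :
    (∀ φ ∈ LinearMap.ker ((1 + Tba : L2 →L[ℂ] L2) : L2 →ₗ[ℂ] L2), Taa φ ∈ LinearMap.ker ((1 + Tab : L2 →L[ℂ] L2) : L2 →ₗ[ℂ] L2)) ∧
    (∀ ψ ∈ LinearMap.ker ((1 + Tab : L2 →L[ℂ] L2) : L2 →ₗ[ℂ] L2), Tbb ψ ∈ LinearMap.ker ((1 + Tba : L2 →L[ℂ] L2) : L2 →ₗ[ℂ] L2)) ∧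
    (∀ φ ∈ LinearMap.ker ((1 + Tba : L2 →L[ℂ] L2) : L2 →ₗ[ℂ] L2), Tbb (Taa φ) = φ) ∧
    (∀ ψ ∈ LinearMap.ker ((1 + Tab : L2 →L[ℂ] L2) : L2 →ₗ[ℂ] L2), Taa (Tbb ψ) = ψ) := by
  let K (u w : R3 → ℝ) (x y : R3) : ℂ := u x * w y / (4 * (Real.pi : ℂ) * (‖x - y‖ : ℝ))
  have iba : IsIntegralOperator Tba (K b a) := hTba
  have iab : IsIntegralOperator Tab (K a b) := hTab
  have iaa : IsIntegralOperator Taa (K a a) := hTaa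
  have ibb : IsIntegralOperator Tbb (K b b) := hTbb
  set s : R3 → ℂ := fun x => (Real.sign (V x) : ℂ)
  have hbs (x : R3) : (b x : ℂ) = s x * a x := by subst ha hb; push_cast; ring
  have hK_left (u : R3 → ℝ) (x y : R3) : K b u x y = s x * K a u x y := by
    simp only [K, hbs]; ring
  have hK_right (u : R3 → ℝ) (x y : R3) : K u b x y = K u a x y * s y := by
    simp only [K, hbs]; ring
  have hTba_sign := iaa.ae_eq_mul_left iba (hK_left a)
  have hTbb_sign := iab.ae_eq_mul_left ibb (hK_left b)
  have hTaa_semiconj : SemiconjBy (Taa : Module.End ℂ L2) (1 + Tba) (1 + Tab) :=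
    (SemiconjBy.one_right _).add_right <| LinearMap.ext fun f =>
      (iab.apply_eq_of_ae_eq_mul iaa (hK_right a) (hTba_sign f)).symm
  have hTbb_semiconj : SemiconjBy (Tbb : Module.End ℂ L2) (1 + Tab) (1 + Tba) :=
    (SemiconjBy.one_right _).add_right <| LinearMap.ext fun f =>
      ibb.apply_eq_of_ae_eq_mul iba (hK_right b) (hTbb_sign f)
  have hTbb_Taa : (Tbb : Module.End ℂ L2) * Taa = Tba * Tba :=
    LinearMap.ext fun f => ibb.apply_eq_of_ae_eq_mul iba (hK_right b) (hTba_sign f)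
  have hTaa_Tbb : (Taa : Module.End ℂ L2) * Tbb = Tab * Tab :=
    LinearMap.ext fun f => (iab.apply_eq_of_ae_eq_mul iaa (hK_right a) (hTbb_sign f)).symm
  exact ⟨fun _ => Module.End.apply_mem_ker_of_semiconjBy hTaa_semiconj,
    fun _ => Module.End.apply_mem_ker_of_semiconjBy hTbb_semiconj,
    fun _ => Module.End.apply_eq_self_of_mem_ker_one_add hTbb_Taa,
    fun _ => Module.End.apply_eq_self_of_mem_ker_one_add hTaa_Tbb⟩

/-- With `M = Ker(1 + bD₀a)` and `N = Ker(1 + aD₀b)`, the map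
`φ ↦ aD₀aφ` is a linear isomorphism of `M` onto `N`, the map `ψ ↦ bD₀bψ` is a linear
isomorphism of `N` onto `M`, and they are inverses of each other. -/
theorem aD0a_bD0b_mutually_inverse
    (V : R3 → ℝ) (p q : ℝ) (hV : AssumptionV V p q)
    (a b : R3 → ℝ)
    (ha : a = fun x => Real.sqrt |V x|)
    (hb : b = fun x => Real.sqrt |V x| * Real.sign (V x))
    (Tba Tab Taa Tbb : L2 →L[ℂ] L2)
    (hTba : ∀ f : L2, ⇑(Tba f) =ᵐ[volume] fun x => ∫ y : R3,
      (b x : ℂ) * (a y : ℂ) / (4 * (Real.pi : ℂ) * (‖x - y‖ : ℝ)) * f y)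
    (hTab : ∀ f : L2, ⇑(Tab f) =ᵐ[volume] fun x => ∫ y : R3,
      (a x : ℂ) * (b y : ℂ) / (4 * (Real.pi : ℂ) * (‖x - y‖ : ℝ)) * f y)
    (hTaa : ∀ f : L2, ⇑(Taa f) =ᵐ[volume] fun x => ∫ y : R3,
      (a x : ℂ) * (a y : ℂ) / (4 * (Real.pi : ℂ) * (‖x - y‖ : ℝ)) * f y)
    (hTbb : ∀ f : L2, ⇑(Tbb f) =ᵐ[volume] fun x => ∫ y : R3,
      (b x : ℂ) * (b y : ℂ) / (4 * (Real.pi : ℂ) * (‖x - y‖ : ℝ)) * f y) :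
    (∀ φ ∈ LinearMap.ker ((1 + Tba : L2 →L[ℂ] L2) : L2 →ₗ[ℂ] L2), Taa φ ∈ LinearMap.ker ((1 + Tab : L2 →L[ℂ] L2) : L2 →ₗ[ℂ] L2)) ∧
    (∀ ψ ∈ LinearMap.ker ((1 + Tab : L2 →L[ℂ] L2) : L2 →ₗ[ℂ] L2), Tbb ψ ∈ LinearMap.ker ((1 + Tba : L2 →L[ℂ] L2) : L2 →ₗ[ℂ] L2)) ∧
    (∀ φ ∈ LinearMap.ker ((1 + Tba : L2 →L[ℂ] L2) : L2 →ₗ[ℂ] L2), Tbb (Taa φ) = φ) ∧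
    (∀ ψ ∈ LinearMap.ker ((1 + Tab : L2 →L[ℂ] L2) : L2 →ₗ[ℂ] L2), Taa (Tbb ψ) = ψ) :=
  aD0a_bD0b_mutually_inverse_general V a b ha hb Tba Tab Taa Tbb hTba hTab hTaa hTbb
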